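/- arXiv:1204.4605 — 2 statements merged into one kernel-verified Lean document; each statement's English description precedes it below -/
import Mathlib

section
/- There is an absolute constant C > 0 such that for every positive integer k, 2^{−k} · ∑_{r=0}^{2^k−1} |∑_{x=0}^{2^k−1} ε(x) e^{2πi r x / 2^k}| ≤ C · k · 2^{θ₀ k / 2}, where θ₀ = log₂ √(2 + √2). -/
/-!
Since `ε(x + 2^j) = -ε(x)` for `x < 2^j`, the exponential sum factors as
`∏_{j<k} (1 - e(2^j r / 2^k))` with `e(t) = exp (2πit)`, of modulus
`∏_{j<k} g(2^j r / 2^k)` where `g(t) = 2 |sin (πt)|`. The sum over `r` of these products is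
dominated by `(L^k w)(0) / w(0)` for the transfer operator
`(L f)(v) = g(v/2) f(v/2) + g((v+1)/2) f((v+1)/2)` and the weight `w = 73/10 + g`,
which satisfies `L w ≤ (27/10) w`. The mean is therefore at most `(27/20)^k`,
and `(27/20)^4 < 2 + √2`.
-/

/-- `eps n = 1` if the binary digit sum of `n` is even, and `-1` otherwise. -/
noncomputable def eps (n : ℕ) : ℂ :=
  if Even ((Nat.digits 2 n).sum) then 1 else -1

open Finset Real

theorem Nat.digits_sum_add_base_pow {b k n : ℕ} (hb : 1 < b) (hn : n < b ^ k) :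
    (Nat.digits b (n + b ^ k)).sum = (Nat.digits b n).sum + 1 := by
  have hlen : (Nat.digits b n).length ≤ k := (Nat.digits_length_le_iff hb n).2 hn
  have h := Nat.digits_append_zeroes_append_digits (k := k - (Nat.digits b n).length)
    (n := n) hb Nat.one_pos
  rw [Nat.add_sub_cancel' hlen, mul_one, Nat.digits_of_lt b 1 one_ne_zero hb] at h
  simp [← h]

theorem eps_add_two_pow {k x : ℕ} (hx : x < 2 ^ k) : eps (x + 2 ^ k) = -eps x := by
  unfold eps
  rw [Nat.digits_sum_add_base_pow one_lt_two hx]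
  by_cases h : Even (Nat.digits 2 x).sum <;> simp [h, Nat.even_add_one]

theorem sum_eps_mul_pow (k : ℕ) (z : ℂ) :
    ∑ x ∈ range (2 ^ k), eps x * z ^ x = ∏ j ∈ range k, (1 - z ^ 2 ^ j) := by
  induction k with
  | zero => simp [eps]
  | succ k ih =>
    have hupper : ∑ x ∈ range (2 ^ k), eps (2 ^ k + x) * z ^ (2 ^ k + x)
        = -(z ^ 2 ^ k * ∑ x ∈ range (2 ^ k), eps x * z ^ x) := by
      rw [mul_sum, ← sum_neg_distrib]
      refine sum_congr rfl fun x hx => ?_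
      rw [add_comm (2 ^ k) x, eps_add_two_pow (mem_range.1 hx), pow_add]
      ring
    rw [pow_succ, mul_two, sum_range_add, hupper, prod_range_succ, ← ih]
    ring

noncomputable def chord (x : ℝ) : ℝ := 2 * |sin (π * x)|

theorem chord_nonneg (x : ℝ) : 0 ≤ chord x := by unfold chord; positivity

theorem chord_periodic : Function.Periodic chord 1 := fun x => by
  simp [chord, mul_add, sin_add_pi]

theorem norm_one_sub_exp (t : ℝ) :
    ‖1 - Complex.exp (2 * π * Complex.I * t)‖ = chord t := by
  rw [norm_sub_rev, show (2 * π * Complex.I * t : ℂ) = Complex.I * ↑(2 * π * t) by push_cast; ring,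
    Complex.norm_exp_I_mul_ofReal_sub_one]
  simp [chord, mul_div_assoc, mul_comm]

theorem norm_sum_eps_mul_exp (k r : ℕ) :
    ‖∑ x ∈ range (2 ^ k), eps x * Complex.exp (2 * π * Complex.I * r * x / 2 ^ k)‖
      = ∏ j ∈ range k, chord (2 ^ j * (r / 2 ^ k)) := by
  set z := Complex.exp (2 * π * Complex.I * r / 2 ^ k)
  have hpow (n : ℕ) : z ^ n = Complex.exp (2 * π * Complex.I * ((n * (r / 2 ^ k) : ℝ) : ℂ)) := by
    rw [← Complex.exp_nat_mul]; push_cast; ring_nf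
  have hexp (x : ℕ) : Complex.exp (2 * π * Complex.I * r * x / 2 ^ k) = z ^ x := by
    rw [← Complex.exp_nat_mul]; ring_nf
  simp only [hexp]
  rw [sum_eps_mul_pow, norm_prod]
  refine prod_congr rfl fun j _ => ?_
  rw [hpow, norm_one_sub_exp, Nat.cast_pow, Nat.cast_ofNat]

theorem Function.Periodic.prod_two_pow_mul_of_two_mul_eq {g : ℝ → ℝ} (hg : Function.Periodic g 1)
    {x v : ℝ} {n : ℕ} (hx : 2 * x = v + n) (k : ℕ) :
    ∏ j ∈ range (k + 1), g (2 ^ j * x) = g x * ∏ j ∈ range k, g (2 ^ j * v) := by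
  rw [prod_range_succ', mul_comm, pow_zero, one_mul]
  congr 1
  refine prod_congr rfl fun j _ => ?_
  have h : (2 : ℝ) ^ (j + 1) * x = 2 ^ j * v + (2 ^ j * n : ℕ) * 1 := by
    push_cast; rw [pow_succ, mul_assoc, hx]; ring
  rw [h, hg.nat_mul _ _]

/-- For the transfer operator `L` of `g`, this reads: `L w ≤ c • w` implies
`(L ^ k w) t ≤ c ^ k * w t`. -/
theorem sum_weight_mul_prod_two_pow_le {g w : ℝ → ℝ} {c : ℝ} (hg₀ : ∀ x, 0 ≤ g x) (hg : Function.Periodic g 1)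
    (hc : 0 ≤ c) (hgw : ∀ v, w (v / 2) * g (v / 2) + w ((v + 1) / 2) * g ((v + 1) / 2) ≤ c * w v)
    (k : ℕ) (t : ℝ) :
    ∑ r ∈ range (2 ^ k), w ((t + r) / 2 ^ k) * ∏ j ∈ range k, g (2 ^ j * ((t + r) / 2 ^ k))
      ≤ c ^ k * w t := by
  induction k generalizing t with
  | zero => simp
  | succ k ih =>
    have hpair (r : ℕ) :
        w ((t + r) / 2 ^ (k + 1)) * ∏ j ∈ range (k + 1), g (2 ^ j * ((t + r) / 2 ^ (k + 1)))
          + w ((t + ↑(2 ^ k + r)) / 2 ^ (k + 1)) *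
              ∏ j ∈ range (k + 1), g (2 ^ j * ((t + ↑(2 ^ k + r)) / 2 ^ (k + 1)))
        ≤ c * (w ((t + r) / 2 ^ k) * ∏ j ∈ range k, g (2 ^ j * ((t + r) / 2 ^ k))) := by
      have hv₀ : (t + r) / 2 ^ (k + 1) = (t + r) / 2 ^ k / 2 := by rw [pow_succ, div_div]
      have hv₁ : (t + ↑(2 ^ k + r)) / 2 ^ (k + 1) = ((t + r) / 2 ^ k + 1) / 2 := by
        push_cast; field_simp; ring
      set v : ℝ := (t + r) / 2 ^ k
      rw [hv₀, hv₁, hg.prod_two_pow_mul_of_two_mul_eq (v := v) (n := 0) (by push_cast; ring),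
        hg.prod_two_pow_mul_of_two_mul_eq (v := v) (n := 1) (by push_cast; ring)]
      have hP : 0 ≤ ∏ j ∈ range k, g (2 ^ j * v) := prod_nonneg fun _ _ => hg₀ _
      nlinarith [mul_le_mul_of_nonneg_right (hgw v) hP]
    calc _ = ∑ r ∈ range (2 ^ k), _ := by
          rw [pow_succ, mul_two, sum_range_add, ← sum_add_distrib]
      _ ≤ ∑ r ∈ range (2 ^ k), c * _ := sum_le_sum fun r _ => hpair r
      _ ≤ c * (c ^ k * w t) := by rw [← mul_sum]; exact mul_le_mul_of_nonneg_left (ih t) hc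
      _ = c ^ (k + 1) * w t := by ring

/-- With `s = |sin (πv/2)|`, `c = |cos (πv/2)|` and `u = s + c`, so that `2sc = u² - 1`, this is
`(27/5) u² - (73/5) u + 1031/100 ≥ 0`, whose discriminant is negative. -/
theorem chord_weight_transfer_le (v : ℝ) :
    (73 / 10 + chord (v / 2)) * chord (v / 2)
        + (73 / 10 + chord ((v + 1) / 2)) * chord ((v + 1) / 2)
      ≤ 27 / 10 * (73 / 10 + chord v) := by
  set s := |sin (π * v / 2)|
  set c := |cos (π * v / 2)|
  have hs : chord (v / 2) = 2 * s := by rw [chord, mul_div_assoc']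
  have hc : chord ((v + 1) / 2) = 2 * c := by
    rw [chord, show π * ((v + 1) / 2) = π * v / 2 + π / 2 by ring, sin_add_pi_div_two]
  have hsc : chord v = 4 * (s * c) := by
    rw [chord, show π * v = 2 * (π * v / 2) by ring, sin_two_mul, abs_mul, abs_mul, abs_two]
    ring
  have hpyth : s ^ 2 + c ^ 2 = 1 := by rw [sq_abs, sq_abs, sin_sq_add_cos_sq]
  rw [hs, hc, hsc]
  nlinarith [sq_nonneg (s + c - 73 / 54)]

theorem sum_prod_chord_le (k : ℕ) :
    ∑ r ∈ range (2 ^ k), ∏ j ∈ range k, chord (2 ^ j * (r / 2 ^ k)) ≤ (27 / 10) ^ k := by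
  have h := sum_weight_mul_prod_two_pow_le (w := fun x => 73 / 10 + chord x) chord_nonneg
    chord_periodic (by norm_num : (0 : ℝ) ≤ 27 / 10) chord_weight_transfer_le k 0
  have hchord₀ : chord 0 = 0 := by simp [chord]
  simp only [zero_add, hchord₀, add_zero] at h
  have hweight : 73 / 10 * ∑ r ∈ range (2 ^ k), ∏ j ∈ range k, chord (2 ^ j * (r / 2 ^ k))
      ≤ (27 / 10) ^ k * (73 / 10) := by
    refine (mul_sum _ _ _).trans_le ((sum_le_sum fun r _ => ?_).trans h)
    exact mul_le_mul_of_nonneg_right (le_add_of_nonneg_right (chord_nonneg _))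
      (prod_nonneg fun _ _ => chord_nonneg _)
  linarith

theorem pow_le_two_rpow_logb (k : ℕ) :
    (27 / 20 : ℝ) ^ k ≤ 2 ^ (logb 2 √(2 + √2) * k / 2) := by
  have hpos : 0 < √(2 + √2) := by positivity
  have hrpow : (2 : ℝ) ^ (logb 2 √(2 + √2) * k / 2) = √√(2 + √2) ^ k := by
    rw [show logb 2 √(2 + √2) * k / 2 = logb 2 √(2 + √2) * (1 / 2) * k by ring,
      rpow_mul zero_le_two, rpow_mul zero_le_two, rpow_logb two_pos (by norm_num) hpos,
      ← sqrt_eq_rpow, rpow_natCast]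
  have hsqrt2 : (133 / 100 : ℝ) ≤ √2 := (le_sqrt (by norm_num) zero_le_two).2 (by norm_num)
  have hbase : (27 / 20 : ℝ) ≤ √√(2 + √2) := by
    rw [le_sqrt (by norm_num) hpos.le, le_sqrt (by norm_num) (by positivity)]
    linarith
  rw [hrpow]
  exact pow_le_pow_left₀ (by norm_num) hbase k

theorem discrete_mean_eps_sum_bound :
    ∃ C > (0 : ℝ), ∀ k : ℕ, 1 ≤ k →
      (2 : ℝ) ^ (-(k : ℝ)) *
          ∑ r ∈ Finset.range (2 ^ k),
            ‖∑ x ∈ Finset.range (2 ^ k),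
                eps x * Complex.exp (2 * Real.pi * Complex.I * r * x / 2 ^ k)‖ ≤
        C * k * (2 : ℝ) ^ (Real.logb 2 (Real.sqrt (2 + Real.sqrt 2)) * k / 2) := by
  refine ⟨1, one_pos, fun k hk => ?_⟩
  simp only [norm_sum_eps_mul_exp]
  calc (2 : ℝ) ^ (-(k : ℝ)) * ∑ r ∈ range (2 ^ k), ∏ j ∈ range k, chord (2 ^ j * (r / 2 ^ k))
      ≤ (2 : ℝ) ^ (-(k : ℝ)) * (27 / 10) ^ k :=
        mul_le_mul_of_nonneg_left (sum_prod_chord_le k) (by positivity)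
    _ = (27 / 20) ^ k := by
        rw [rpow_neg zero_le_two, rpow_natCast, ← div_eq_inv_mul, ← div_pow]
        norm_num
    _ ≤ 2 ^ (logb 2 √(2 + √2) * k / 2) := pow_le_two_rpow_logb k
    _ ≤ 1 * k * 2 ^ (logb 2 √(2 + √2) * k / 2) := by
        rw [one_mul]
        exact le_mul_of_one_le_left (by positivity) (by exact_mod_cast hk)
end

section
/- There is an absolute constant C > 0 such that for every positive integer d, every real number α, and every real Y ≥ 2, |∑_{n ≥ 1, dn ≤ Y} ε(dn) e^{2πiα d n}| ≤ C · Y^λ · ln Y, where λ = ln 3 / ln 4. -/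
open Finset

lemma Nat.digits_sum_eq_mod_add {b : ℕ} (hb : 1 < b) (n : ℕ) :
    (Nat.digits b n).sum = n % b + (Nat.digits b (n / b)).sum := by
  rcases n.eq_zero_or_pos with rfl | hn
  · simp
  · rw [Nat.digits_def' hb hn, List.sum_cons]

lemma eps_two_mul (n : ℕ) : eps (2 * n) = eps n := by
  simp only [eps, Nat.digits_sum_eq_mod_add one_lt_two (2 * n), Nat.mul_mod_right,
    Nat.mul_div_cancel_left n two_pos, zero_add]

lemma eps_two_mul_add_one (n : ℕ) : eps (2 * n + 1) = -eps n := by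
  have hdiv : (2 * n + 1) / 2 = n := by omega
  have hmod : (2 * n + 1) % 2 = 1 := by omega
  unfold eps
  simp only [Nat.digits_sum_eq_mod_add one_lt_two (2 * n + 1), hdiv, hmod, add_comm 1,
    Nat.even_add_one]
  split_ifs <;> simp

lemma norm_eps (n : ℕ) : ‖eps n‖ = 1 := by
  unfold eps; split_ifs <;> simp

noncomputable def thueMorseSum (M : ℕ) (z : ℂ) : ℂ := ∑ n ∈ range M, eps n * z ^ n

lemma thueMorseSum_two_mul (M : ℕ) (z : ℂ) :
    thueMorseSum (2 * M) z = (1 - z) * thueMorseSum M (z ^ 2) := by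
  induction M with
  | zero => simp [thueMorseSum]
  | succ M ih =>
    rw [show 2 * (M + 1) = 2 * M + 1 + 1 by ring]
    simp only [thueMorseSum] at *
    rw [sum_range_succ, sum_range_succ, ih, sum_range_succ, eps_two_mul, eps_two_mul_add_one]
    ring

lemma thueMorseSum_two_mul_add_one (M : ℕ) (z : ℂ) :
    thueMorseSum (2 * M + 1) z = (1 - z) * thueMorseSum M (z ^ 2) + eps M * z ^ (2 * M) := by
  rw [thueMorseSum, sum_range_succ, ← thueMorseSum, thueMorseSum_two_mul, eps_two_mul]

lemma norm_one_sub_mul_norm_one_sub_sq_le {z : ℂ} (hz : ‖z‖ = 1) (h : √3 < ‖1 - z‖) :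
    ‖1 - z‖ * ‖1 - z ^ 2‖ ≤ 3 := by
  have hpar := parallelogram_law_with_norm ℝ (1 : ℂ) z
  rw [norm_one, hz] at hpar
  have hu : 3 < ‖1 - z‖ ^ 2 := by
    simpa using pow_lt_pow_left₀ h (Real.sqrt_nonneg 3) two_ne_zero
  rw [show 1 - z ^ 2 = (1 - z) * (1 + z) by ring, norm_mul, ← mul_assoc, ← sq]
  have hv : ‖1 + z‖ ≤ 1 := by nlinarith [norm_nonneg (1 + z)]
  nlinarith [mul_nonneg (sub_nonneg.2 hv) (norm_nonneg (1 + z))]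

noncomputable def dyadicProd (j : ℕ) (z : ℂ) : ℝ := ∏ k ∈ range j, ‖1 - z ^ 2 ^ k‖

lemma dyadicProd_zero (z : ℂ) : dyadicProd 0 z = 1 := prod_range_zero _

lemma dyadicProd_succ (j : ℕ) (z : ℂ) :
    dyadicProd (j + 1) z = ‖1 - z‖ * dyadicProd j (z ^ 2) := by
  simp only [dyadicProd, prod_range_succ', pow_zero, pow_one, pow_succ, pow_mul, mul_comm]

lemma dyadicProd_nonneg (j : ℕ) (z : ℂ) : 0 ≤ dyadicProd j z :=
  prod_nonneg fun _ _ => norm_nonneg _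

lemma norm_one_sub_le_two {z : ℂ} (hz : ‖z‖ = 1) : ‖1 - z‖ ≤ 2 := by
  simpa [hz, one_add_one_eq_two] using norm_sub_le (1 : ℂ) z

lemma dyadicProd_le {z : ℂ} (hz : ‖z‖ = 1) (j : ℕ) : dyadicProd j z ≤ 2 * √3 ^ j := by
  induction j using Nat.strong_induction_on generalizing z with
  | _ j ih =>
  have hz2 : ‖z ^ 2‖ = 1 := by rw [norm_pow, hz, one_pow]
  have hs : 0 ≤ √3 := Real.sqrt_nonneg 3
  have hs3 : √3 ^ 2 = 3 := Real.sq_sqrt (by norm_num)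
  rcases j with _ | j
  · simp [dyadicProd_zero]
  rw [dyadicProd_succ]
  by_cases hsmall : ‖1 - z‖ ≤ √3
  · calc ‖1 - z‖ * dyadicProd j (z ^ 2) ≤ √3 * (2 * √3 ^ j) :=
          mul_le_mul hsmall (ih j (by omega) hz2) (dyadicProd_nonneg _ _) hs
      _ = 2 * √3 ^ (j + 1) := by ring
  rcases j with _ | j
  · simpa [dyadicProd_zero] using (norm_one_sub_le_two hz).trans (by nlinarith)
  rw [dyadicProd_succ, ← mul_assoc]
  calc ‖1 - z‖ * ‖1 - z ^ 2‖ * dyadicProd j ((z ^ 2) ^ 2) ≤ 3 * (2 * √3 ^ j) :=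
        mul_le_mul (norm_one_sub_mul_norm_one_sub_sq_le hz (not_le.1 hsmall))
          (ih j (by omega) (by rw [norm_pow, hz2, one_pow])) (dyadicProd_nonneg _ _) (by norm_num)
    _ = 2 * √3 ^ (j + 2) := by rw [pow_add, hs3]; ring

lemma norm_thueMorseSum_le {z : ℂ} (hz : ‖z‖ = 1) {L M : ℕ} (hM : M ≤ 2 ^ L) :
    ‖thueMorseSum M z‖ ≤ ∑ j ∈ range (L + 1), dyadicProd j z := by
  induction L generalizing M z with
  | zero =>
    interval_cases M <;> simp [thueMorseSum, dyadicProd_zero, eps]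
  | succ L ih =>
    have hz2 : ‖z ^ 2‖ = 1 := by rw [norm_pow, hz, one_pow]
    obtain ⟨m, hmM, hsplit⟩ : ∃ m ≤ 2 ^ L,
        ‖thueMorseSum M z‖ ≤ ‖1 - z‖ * ‖thueMorseSum m (z ^ 2)‖ + 1 := by
      obtain ⟨m, rfl | rfl⟩ := M.even_or_odd'
      · refine ⟨m, by omega, ?_⟩
        rw [thueMorseSum_two_mul, norm_mul]
        exact le_add_of_nonneg_right zero_le_one
      · refine ⟨m, by omega, ?_⟩
        rw [thueMorseSum_two_mul_add_one, ← norm_mul]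
        refine (norm_add_le _ _).trans (add_le_add_right (le_of_eq ?_) _)
        rw [norm_mul, norm_eps, norm_pow, hz, one_pow, one_mul]
    calc ‖thueMorseSum M z‖ ≤ ‖1 - z‖ * ∑ j ∈ range (L + 1), dyadicProd j (z ^ 2) + 1 :=
          hsplit.trans (by gcongr; exact ih hz2 hmM)
      _ = ∑ j ∈ range (L + 1 + 1), dyadicProd j z := by
          simp only [mul_sum, ← dyadicProd_succ, sum_range_succ' _ (L + 1), dyadicProd_zero]

lemma sum_range_sqrt_three_pow_le (n : ℕ) : ∑ j ∈ range n, √3 ^ j ≤ 3 / 2 * √3 ^ n := by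
  have h53 : 5 / 3 ≤ √3 := Real.le_sqrt_of_sq_le (by norm_num)
  induction n with
  | zero => norm_num
  | succ n ih =>
    rw [sum_range_succ, pow_succ]
    nlinarith [pow_nonneg (Real.sqrt_nonneg 3) n]

lemma sum_Icc_eq_thueMorseSum_sub_one (K : ℕ) (z : ℂ) :
    ∑ m ∈ Icc 1 K, eps m * z ^ m = thueMorseSum (K + 1) z - 1 := by
  rw [← Ico_add_one_right_eq_Icc, sum_Ico_eq_sub _ (by omega), thueMorseSum]
  simp [eps]

lemma norm_sum_Icc_eps_mul_pow_le {z : ℂ} (hz : ‖z‖ = 1) {K L : ℕ} (hK : K < 2 ^ (L + 1)) :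
    ‖∑ m ∈ Icc 1 K, eps m * z ^ m‖ ≤ 10 * √3 ^ L := by
  have hs3 : √3 ^ 2 = 3 := Real.sq_sqrt (by norm_num)
  have hone : 1 ≤ √3 ^ L := one_le_pow₀ (Real.one_le_sqrt.2 (by norm_num))
  rw [sum_Icc_eq_thueMorseSum_sub_one]
  calc ‖thueMorseSum (K + 1) z - 1‖ ≤ ∑ j ∈ range (L + 1 + 1), 2 * √3 ^ j + 1 := by
        refine (norm_sub_le _ _).trans (add_le_add ?_ norm_one.le)
        exact (norm_thueMorseSum_le hz hK).trans (sum_le_sum fun j _ => dyadicProd_le hz j)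
    _ ≤ 2 * (3 / 2 * √3 ^ (L + 2)) + 1 := by
        rw [← mul_sum]; gcongr; exact sum_range_sqrt_three_pow_le _
    _ ≤ 10 * √3 ^ L := by rw [pow_add, hs3]; linarith

lemma IsPrimitiveRoot.sum_pow_pow_eq_ite {R : Type*} [CommRing R] [IsDomain R] {ζ : R} {d : ℕ}
    (hζ : IsPrimitiveRoot ζ d) (m : ℕ) :
    ∑ j ∈ range d, (ζ ^ m) ^ j = if d ∣ m then (d : R) else 0 := by
  split_ifs with hdm
  · simp [(hζ.pow_eq_one_iff_dvd m).2 hdm]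
  · have hne : ζ ^ m - 1 ≠ 0 := sub_ne_zero.2 fun h => hdm ((hζ.pow_eq_one_iff_dvd m).1 h)
    have hgeom := geom_sum_mul (ζ ^ m) d
    rw [← pow_mul, mul_comm m d, pow_mul, hζ.pow_eq_one, one_pow, sub_self] at hgeom
    exact (mul_eq_zero.1 hgeom).resolve_right hne

lemma IsPrimitiveRoot.mul_sum_filter_dvd {R : Type*} [CommRing R] [IsDomain R] {ζ : R} {d : ℕ}
    (hζ : IsPrimitiveRoot ζ d) (s : Finset ℕ) (f : ℕ → R) :
    (d : R) * ∑ m ∈ s with d ∣ m, f m = ∑ j ∈ range d, ∑ m ∈ s, f m * (ζ ^ m) ^ j := by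
  rw [sum_comm, sum_filter, mul_sum]
  refine sum_congr rfl fun m _ => ?_
  rw [← mul_sum, hζ.sum_pow_pow_eq_ite]
  split_ifs <;> ring

lemma sum_Icc_mul_eq_sum_filter_dvd {M : Type*} [AddCommMonoid M] (g : ℕ → M) {d : ℕ} (hd : 0 < d)
    (N : ℕ) : ∑ n ∈ Icc 1 N, g (d * n) = ∑ m ∈ Icc 1 (d * N) with d ∣ m, g m := by
  have himage : (Icc 1 N).image (d * ·) = {m ∈ Icc 1 (d * N) | d ∣ m} := by
    ext m
    simp only [mem_image, mem_filter, mem_Icc]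
    constructor
    · rintro ⟨n, ⟨h1, hN⟩, rfl⟩
      exact ⟨⟨Nat.one_le_iff_ne_zero.2 (by positivity), Nat.mul_le_mul_left d hN⟩,
        dvd_mul_right d n⟩
    · rintro ⟨⟨h1, hN⟩, n, rfl⟩
      exact ⟨n, ⟨Nat.pos_of_mul_pos_left h1, Nat.le_of_mul_le_mul_left hN hd⟩, rfl⟩
  rw [← himage, sum_image fun a _ b _ h => Nat.eq_of_mul_eq_mul_left hd h]

lemma norm_sum_Icc_dilate_le (a : ℕ → ℂ) {d : ℕ} (hd : 0 < d) (N : ℕ) {z : ℂ} (hz : ‖z‖ = 1)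
    {B : ℝ} (hB : ∀ w : ℂ, ‖w‖ = 1 → ‖∑ m ∈ Icc 1 (d * N), a m * w ^ m‖ ≤ B) :
    ‖∑ n ∈ Icc 1 N, a (d * n) * z ^ (d * n)‖ ≤ B := by
  have hζ := Complex.isPrimitiveRoot_exp d hd.ne'
  set ζ := Complex.exp (2 * Real.pi * Complex.I / d)
  have hζ1 : ‖ζ‖ = 1 := hζ.norm'_eq_one hd.ne'
  have hd' : (0 : ℝ) < d := Nat.cast_pos.2 hd
  rw [sum_Icc_mul_eq_sum_filter_dvd (fun m => a m * z ^ m) hd]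
  refine le_of_mul_le_mul_left ?_ hd'
  calc (d : ℝ) * ‖∑ m ∈ Icc 1 (d * N) with d ∣ m, a m * z ^ m‖
      = ‖∑ j ∈ range d, ∑ m ∈ Icc 1 (d * N), a m * (z * ζ ^ j) ^ m‖ := by
        rw [← Complex.norm_natCast, ← norm_mul, hζ.mul_sum_filter_dvd]
        congr 1
        refine sum_congr rfl fun j _ => sum_congr rfl fun m _ => ?_
        ring
    _ ≤ ∑ j ∈ range d, B := norm_sum_le_of_le _ fun j _ => hB _ (by simp [hz, hζ1])
    _ = d * B := by simp

lemma sqrt_three_pow_eq_rpow (L : ℕ) : √3 ^ L = ((2 : ℝ) ^ L) ^ (Real.log 3 / Real.log 4) := by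
  have hlog4 : Real.log 4 = 2 * Real.log 2 := by
    rw [show (4 : ℝ) = 2 ^ 2 by norm_num, Real.log_pow, Nat.cast_ofNat]
  have hlog2 : Real.log 2 ≠ 0 := (Real.log_pos one_lt_two).ne'
  rw [← Real.exp_log (pow_pos (Real.sqrt_pos.2 three_pos) L), Real.rpow_def_of_pos (by positivity),
    Real.log_pow, Real.log_pow, Real.log_sqrt three_pos.le, hlog4]
  field_simp

lemma sqrt_three_pow_le_rpow {Y : ℝ} {L : ℕ} (hL : (2 : ℝ) ^ L ≤ Y) :
    √3 ^ L ≤ Y ^ (Real.log 3 / Real.log 4) := by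
  rw [sqrt_three_pow_eq_rpow]
  exact Real.rpow_le_rpow (by positivity) hL
    (div_nonneg (Real.log_nonneg (by norm_num)) (Real.log_nonneg (by norm_num)))

theorem eps_dilated_sum_bound :
    ∃ C > (0 : ℝ), ∀ d : ℕ, 1 ≤ d → ∀ α Y : ℝ, 2 ≤ Y →
      ‖∑ n ∈ Finset.Icc 1 ⌊Y / d⌋₊,
          eps (d * n) * Complex.exp (2 * Real.pi * Complex.I * α * (d * n))‖ ≤
        C * Y ^ (Real.log 3 / Real.log 4) * Real.log Y := by
  refine ⟨20, by norm_num, fun d hd α Y hY => ?_⟩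
  set w := Complex.exp (2 * Real.pi * Complex.I * α)
  have hw : ‖w‖ = 1 := by simp [w, Complex.norm_exp]
  have hexp (n : ℕ) : Complex.exp (2 * Real.pi * Complex.I * α * (d * n)) = w ^ (d * n) := by
    rw [← Complex.exp_nat_mul]; push_cast; ring_nf
  set K := ⌊Y⌋₊
  have hK0 : K ≠ 0 := (Nat.floor_pos.2 (by linarith)).ne'
  have hdN : d * ⌊Y / d⌋₊ < 2 ^ (Nat.log 2 K + 1) := by
    rw [Nat.floor_div_natCast]
    exact (Nat.mul_div_le K d).trans_lt (Nat.lt_pow_succ_log_self one_lt_two K)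
  have h2L : (2 : ℝ) ^ Nat.log 2 K ≤ Y := calc
    (2 : ℝ) ^ Nat.log 2 K ≤ K := mod_cast Nat.pow_log_le_self 2 hK0
    _ ≤ Y := Nat.floor_le (by linarith)
  have hlog : 1 / 2 ≤ Real.log Y :=
    (Real.log_two_gt_d9.le.trans' (by norm_num)).trans (Real.log_le_log two_pos hY)
  have hYpow := Real.rpow_nonneg (show 0 ≤ Y by linarith) (Real.log 3 / Real.log 4)
  simp only [hexp]
  calc _ ≤ 10 * √3 ^ Nat.log 2 K :=
        norm_sum_Icc_dilate_le eps hd _ hw fun z hz => norm_sum_Icc_eps_mul_pow_le hz hdN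
    _ ≤ 10 * Y ^ (Real.log 3 / Real.log 4) := by gcongr; exact sqrt_three_pow_le_rpow h2L
    _ ≤ 20 * Y ^ (Real.log 3 / Real.log 4) * Real.log Y := by nlinarith
end
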